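/- arXiv:2310.09992 — 2 statements merged into one kernel-verified Lean document; each statement's English description precedes it below -/
import Mathlib

section
/- Let G₀, G₁, G₂ be nonzero complex numbers of equal absolute value √q (q > 0) and set T_j := G₀ + ζ^j G₁ + ζ^{2j} G₂ where ζ = e^{2πi/3}. Then for each i ∈ {0,1,2}, T_{i+1}T_{i+2} − T_i² = 0 if and only if T_i = 0 (indices mod 3). -/
/-!
Write `x = G₀`, `y = ζ^i G₁`, `z = ζ^{2i} G₂`. Then `T_i = x + y + z`, while `T_{i+1}` and `T_{i+2}`
are its twists by `ζ` and `ζ²`, whose product is `x² + y² + z² - xy - yz - zx`; hence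
`T_{i+1} T_{i+2} - T_i² = -3 (xy + yz + zx)`. As `x, y, z` have a common modulus `r`,
`x̄ = r²/x` etc., so `r² (xy + yz + zx) = xyz · conj (x + y + z)`: for `r ≠ 0` the pairwise sum
vanishes exactly when `x + y + z` does.
-/

open ComplexConjugate

theorem twist_mul_twist_sub_sq {R : Type*} [CommRing R] {ω : R} (hω : ω ^ 2 + ω + 1 = 0)
    (x y z : R) :
    (x + ω * y + ω ^ 2 * z) * (x + ω ^ 2 * y + (ω ^ 2) ^ 2 * z) - (x + y + z) ^ 2 =
      -3 * (x * y + y * z + z * x) := by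
  linear_combination (x * y + (ω ^ 2 - ω + 1) * x * z + (ω - 1) * y ^ 2
    + (ω ^ 3 + 1) * (ω - 1) * z ^ 2 + (ω ^ 3 - ω + 1) * y * z) * hω

namespace Complex

theorem sq_norm_mul_pairwise_sum {x y z : ℂ} (hxy : ‖x‖ = ‖y‖) (hxz : ‖x‖ = ‖z‖) :
    (‖x‖ ^ 2 : ℂ) * (x * y + y * z + z * x) = x * y * z * conj (x + y + z) := by
  have hx := mul_conj' x
  have hy := mul_conj' y
  have hz := mul_conj' z
  rw [← hxy] at hy
  rw [← hxz] at hz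
  simp only [map_add]
  linear_combination (-y * z) * hx - x * z * hy - x * y * hz

theorem pairwise_sum_eq_zero_iff_of_norm_eq {x y z : ℂ} (hxy : ‖x‖ = ‖y‖) (hxz : ‖x‖ = ‖z‖) :
    x * y + y * z + z * x = 0 ↔ x + y + z = 0 := by
  by_cases hx : x = 0
  · have hy : y = 0 := by rwa [hx, norm_zero, eq_comm, norm_eq_zero] at hxy
    have hz : z = 0 := by rwa [hx, norm_zero, eq_comm, norm_eq_zero] at hxz
    simp [hx, hy, hz]
  have hy : y ≠ 0 := by rw [← norm_ne_zero_iff, ← hxy, norm_ne_zero_iff]; exact hx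
  have hz : z ≠ 0 := by rw [← norm_ne_zero_iff, ← hxz, norm_ne_zero_iff]; exact hx
  have hr : (‖x‖ ^ 2 : ℂ) ≠ 0 := by exact_mod_cast pow_ne_zero 2 (norm_ne_zero_iff.mpr hx)
  rw [← mul_right_inj' hr, sq_norm_mul_pairwise_sum hxy hxz, mul_zero,
    mul_eq_zero_iff_left (by simp [hx, hy, hz]), map_eq_zero]

end Complex

theorem stmt1_general (q : ℝ) (G₀ G₁ G₂ : ℂ)
    (h0 : ‖G₀‖ = Real.sqrt q) (h1 : ‖G₁‖ = Real.sqrt q)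
    (h2 : ‖G₂‖ = Real.sqrt q)
    (ζ : ℂ) (hζ : ζ = Complex.exp (2 * Real.pi * Complex.I / 3))
    (T : ℤ → ℂ) (hT : ∀ j : ℤ, T j = G₀ + ζ ^ j * G₁ + ζ ^ (2 * j) * G₂)
    (i : ℤ) :
    T (i + 1) * T (i + 2) - (T i) ^ 2 = 0 ↔ T i = 0 := by
  have hprim : IsPrimitiveRoot ζ 3 := by
    simpa [hζ] using Complex.isPrimitiveRoot_exp 3 three_ne_zero
  have hω : ζ ^ 2 + ζ + 1 = 0 := by
    have h := hprim.geom_sum_eq_zero (by norm_num)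
    simp only [Finset.sum_range_succ, Finset.sum_range_zero] at h
    linear_combination h
  have hζ0 : ζ ≠ 0 := hprim.ne_zero three_ne_zero
  set y := ζ ^ i * G₁
  set z := ζ ^ (2 * i) * G₂
  have hshift (k : ℕ) : T (i + k) = G₀ + ζ ^ k * y + (ζ ^ k) ^ 2 * z := by
    rw [hT, mul_add, zpow_add₀ hζ0, zpow_add₀ hζ0, mul_comm 2 (k : ℤ), zpow_mul ζ k 2,
      zpow_natCast, zpow_ofNat]
    ring
  have hTi : T i = G₀ + y + z := by simpa using hshift 0
  have hnorm (j : ℤ) (G : ℂ) : ‖ζ ^ j * G‖ = ‖G‖ := by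
    rw [norm_mul, norm_zpow, hprim.norm'_eq_one three_ne_zero, one_zpow, one_mul]
  rw [show i + 1 = i + (1 : ℕ) by simp, show i + 2 = i + (2 : ℕ) by simp, hshift, hshift, hTi,
    pow_one, twist_mul_twist_sub_sq hω, mul_eq_zero_iff_left (by norm_num)]
  exact Complex.pairwise_sum_eq_zero_iff_of_norm_eq (by rw [hnorm, h0, h1])
    (by rw [hnorm, h0, h2])

theorem stmt1 (q : ℝ) (hq : 0 < q) (G₀ G₁ G₂ : ℂ)
    (hG0 : G₀ ≠ 0) (hG1 : G₁ ≠ 0) (hG2 : G₂ ≠ 0)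
    (h0 : ‖G₀‖ = Real.sqrt q) (h1 : ‖G₁‖ = Real.sqrt q)
    (h2 : ‖G₂‖ = Real.sqrt q)
    (ζ : ℂ) (hζ : ζ = Complex.exp (2 * Real.pi * Complex.I / 3))
    (T : ℤ → ℂ) (hT : ∀ j : ℤ, T j = G₀ + ζ ^ j * G₁ + ζ ^ (2 * j) * G₂)
    (i : ℤ) :
    T (i + 1) * T (i + 2) - (T i) ^ 2 = 0 ↔ T i = 0 :=
  stmt1_general q G₀ G₁ G₂ h0 h1 h2 ζ hζ T hT i
end

section
/- Let G₀, G₁, G₂ be complex numbers each of absolute value √q (q > 0), ζ = e^{2πi/3}, and T_j := G₀ + ζ^j G₁ + ζ^{2j} G₂. Then the 3×3 matrix M with rows (T₀,T₁,T₂), (T₁,T₂,T₀), (T₂,T₀,T₁) has all its minors (of all sizes 1, 2, 3) nonzero if and only if T₀ ≠ 0, T₁ ≠ 0 and T₂ ≠ 0. -/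
/-!
The matrix is anticirculant, `M i j = T (i + j)` with indices mod 3, so its 1×1 minors are the
`T j`, its 2×2 minors are up to sign the entries of its adjugate, which is again anticirculant
with entries `T (j+1) * T (j+2) - T j ^ 2 = -3 (ζ^j G₀G₁ + ζ^(2j) G₀G₂ + G₁G₂)`, and its
determinant is `-27 G₀G₁G₂` (factor `x³ + y³ + z³ - 3xyz` over the cube roots of unity).
Since `|G_k|² = q`, conjugating `T j` gives
`q (T (j+1) T (j+2) - T j ²) = -3 G₀G₁G₂ · conj (T j)`, so a 2×2 minor vanishes exactly when
some `T j` does.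
-/

open Function Equiv

theorem Fin.exists_succAbove_comp_perm {n : ℕ} {r : Fin n → Fin (n + 1)} (hr : Injective r) :
    ∃ (p : Fin (n + 1)) (σ : Perm (Fin n)), r = p.succAbove ∘ σ := by
  obtain ⟨p, hp⟩ : ∃ p, p ∉ Set.range r := by
    by_contra! h
    simpa using Fintype.card_le_of_surjective r h
  choose g hg using fun i => Fin.exists_succAbove_eq fun h => hp ⟨i, h⟩
  have hg_inj : Injective g := fun i j hij => hr <| by rw [← hg i, ← hg j, hij]
  exact ⟨p, .ofBijective g (Finite.injective_iff_bijective.mp hg_inj),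
    funext fun i => (hg i).symm⟩

namespace Matrix

variable {R : Type*} [CommRing R]

theorem det_submatrix_eq_or_eq_neg {ι : Type*} [Fintype ι] [DecidableEq ι] (A : Matrix ι ι R)
    {r c : ι → ι} (hr : Injective r) (hc : Injective c) :
    (A.submatrix r c).det = A.det ∨ (A.submatrix r c).det = -A.det := by
  let σ := Equiv.ofBijective r (Finite.injective_iff_bijective.mp hr)
  let τ := Equiv.ofBijective c (Finite.injective_iff_bijective.mp hc)
  have hsplit : A.submatrix r c = (A.submatrix σ id).submatrix id τ := rfl
  rw [hsplit, det_permute', det_permute]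
  rcases Int.units_eq_one_or (Perm.sign σ) with h | h <;>
    rcases Int.units_eq_one_or (Perm.sign τ) with h' | h' <;> simp [h, h']

theorem exists_det_submatrix_eq_adjugate_or_eq_neg {n : ℕ}
    (A : Matrix (Fin (n + 1)) (Fin (n + 1)) R) {r c : Fin n → Fin (n + 1)} (hr : Injective r)
    (hc : Injective c) :
    ∃ i j, (A.submatrix r c).det = A.adjugate i j ∨
      (A.submatrix r c).det = -A.adjugate i j := by
  obtain ⟨p, σ, rfl⟩ := Fin.exists_succAbove_comp_perm hr
  obtain ⟨p', τ, rfl⟩ := Fin.exists_succAbove_comp_perm hc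
  refine ⟨p', p, ?_⟩
  have hsplit : A.submatrix (p.succAbove ∘ σ) (p'.succAbove ∘ τ) =
      (A.submatrix p.succAbove p'.succAbove).submatrix σ τ := rfl
  rw [adjugate_fin_succ_eq_det_submatrix, hsplit]
  rcases det_submatrix_eq_or_eq_neg (A.submatrix _ _) σ.injective τ.injective with h | h <;>
    rcases neg_one_pow_eq_or R (p + p' : ℕ) with h' | h' <;> rw [h, h'] <;> simp

theorem apply_ne_zero_of_forall_det_submatrix_ne_zero {m n : Type*} (A : Matrix m n R)
    (hA : ∀ (k : ℕ) (r : Fin k → m) (c : Fin k → n), Injective r → Injective c →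
      (A.submatrix r c).det ≠ 0) (i : m) (j : n) : A i j ≠ 0 := by
  have h := hA 1 ![i] ![j] (injective_of_subsingleton _) (injective_of_subsingleton _)
  rwa [det_fin_one] at h

theorem det_submatrix_ne_zero_of_fin_three [Nontrivial R] (A : Matrix (Fin 3) (Fin 3) R)
    (hA : ∀ i j, A i j ≠ 0) (hadj : ∀ i j, A.adjugate i j ≠ 0) (hdet : A.det ≠ 0)
    {k : ℕ} {r c : Fin k → Fin 3} (hr : Injective r) (hc : Injective c) :
    (A.submatrix r c).det ≠ 0 := by
  have hk : k ≤ 3 := by simpa using Fintype.card_le_of_injective r hr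
  interval_cases k
  · simp
  · simpa using hA (r 0) (c 0)
  · obtain ⟨i, j, h | h⟩ := exists_det_submatrix_eq_adjugate_or_eq_neg A hr hc <;>
      rw [h] <;> simp [hadj]
  · rcases det_submatrix_eq_or_eq_neg A hr hc with h | h <;> rw [h] <;> simp [hdet]

def anticirculant {α : Type*} {n : ℕ} (v : Fin n → α) : Matrix (Fin n) (Fin n) α :=
  of fun i j => v (i + j)

@[simp]
theorem anticirculant_apply {α : Type*} {n : ℕ} (v : Fin n → α) (i j : Fin n) :
    anticirculant v i j = v (i + j) := rfl

theorem det_anticirculant_fin_three (v : Fin 3 → R) :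
    (anticirculant v).det = 3 * v 0 * v 1 * v 2 - v 0 ^ 3 - v 1 ^ 3 - v 2 ^ 3 := by
  rw [det_fin_three]
  simp only [anticirculant_apply, Fin.isValue, Fin.reduceAdd]
  ring

theorem adjugate_anticirculant_fin_three (v : Fin 3 → R) :
    (anticirculant v).adjugate = anticirculant fun k => v (k + 1) * v (k + 2) - v k ^ 2 := by
  ext i j
  fin_cases i <;> fin_cases j <;> simp [adjugate_fin_three] <;> ring

end Matrix

section CubeRootOfUnity

variable {R : Type*} [CommRing R] {ω : R}

theorem pow_three_eq_one_of_sq_add_self_add_one (hω : ω ^ 2 + ω + 1 = 0) : ω ^ 3 = 1 := by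
  linear_combination (ω - 1) * hω

theorem pow_three_add_pow_three_add_pow_three_sub_mul (hω : ω ^ 2 + ω + 1 = 0) (x y z : R) :
    x ^ 3 + y ^ 3 + z ^ 3 - 3 * x * y * z =
      (x + y + z) * (x + ω * y + ω ^ 2 * z) * (x + ω ^ 2 * y + ω * z) := by
  linear_combination (-(x + y + z) * ((ω - 1) * (y ^ 2 + z ^ 2) + x * y + x * z
    + (ω ^ 2 - ω + 1) * y * z)) * hω

def dft3 (ω a b c : R) (j : ℕ) : R := a + ω ^ j * b + ω ^ (2 * j) * c

theorem dft3_periodic (hω : ω ^ 3 = 1) (a b c : R) : Periodic (dft3 ω a b c) 3 := by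
  have hω₆ : ω ^ (2 * 3) = 1 := by rw [mul_comm, pow_mul, hω, one_pow]
  intro j
  rw [dft3, dft3, mul_add, pow_add, pow_add, hω, hω₆]
  ring

theorem dft3_add_one_mul_dft3_add_two_sub_sq (hω : ω ^ 2 + ω + 1 = 0) (a b c : R) (j : ℕ) :
    dft3 ω a b c (j + 1) * dft3 ω a b c (j + 2) - dft3 ω a b c j ^ 2 =
      -3 * (ω ^ j * a * b + ω ^ (2 * j) * a * c + b * c) := by
  set x := ω ^ j
  have hx : x ^ 3 = 1 := by
    rw [← pow_mul, mul_comm, pow_mul, pow_three_eq_one_of_sq_add_self_add_one hω, one_pow]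
  simp only [dft3, mul_add, pow_add, pow_mul]
  linear_combination (x * a * b + x ^ 2 * (ω ^ 2 - ω + 1) * a * c + x ^ 2 * (ω - 1) * b ^ 2
    + x ^ 4 * (ω ^ 3 + 1) * (ω - 1) * c ^ 2 + x ^ 3 * (ω ^ 3 - ω + 1) * b * c) * hω
    - 3 * b * c * hx

theorem det_anticirculant_dft3 (hω : ω ^ 2 + ω + 1 = 0) (a b c : R) :
    (Matrix.anticirculant fun k : Fin 3 => dft3 ω a b c k).det = -27 * a * b * c := by
  set t := dft3 ω a b c
  have h₀ : t 0 + t 1 + t 2 = 3 * a := by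
    simp only [t, dft3]
    linear_combination (b + (ω ^ 2 - ω + 1) * c) * hω
  have h₁ : t 0 + ω * t 1 + ω ^ 2 * t 2 = 3 * c := by
    simp only [t, dft3]
    linear_combination (a + (ω ^ 2 - ω + 1) * b + (ω - 1) * (ω ^ 3 + 2) * c) * hω
  have h₂ : t 0 + ω ^ 2 * t 1 + ω * t 2 = 3 * b := by
    simp only [t, dft3]
    linear_combination (a + 2 * (ω - 1) * b + (ω ^ 3 - ω + 1) * c) * hω
  calc (Matrix.anticirculant fun k : Fin 3 => t k).det
      = -(t 0 ^ 3 + t 1 ^ 3 + t 2 ^ 3 - 3 * t 0 * t 1 * t 2) := by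
        rw [Matrix.det_anticirculant_fin_three]
        simp only [Fin.val_zero, Fin.val_one, Fin.val_two]
        ring
    _ = -(3 * a * (3 * c) * (3 * b)) := by
        rw [pow_three_add_pow_three_add_pow_three_sub_mul hω, h₀, h₁, h₂]
    _ = -27 * a * b * c := by ring

theorem adjugate_anticirculant_dft3_apply (hω : ω ^ 3 = 1) (a b c : R) (i j : Fin 3) :
    (Matrix.anticirculant fun k : Fin 3 => dft3 ω a b c k).adjugate i j =
      dft3 ω a b c ((i + j : Fin 3) + 1) * dft3 ω a b c ((i + j : Fin 3) + 2) -
        dft3 ω a b c (i + j : Fin 3) ^ 2 := by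
  have hval_add (k m : Fin 3) : dft3 ω a b c (k + m : Fin 3) = dft3 ω a b c (k + m : ℕ) := by
    rw [Fin.val_add, (dft3_periodic hω a b c).map_mod_nat]
  rw [Matrix.adjugate_anticirculant_fin_three, Matrix.anticirculant_apply, hval_add _ 1,
    hval_add _ 2]
  rfl

theorem IsPrimitiveRoot.sq_add_self_add_one {K : Type*} [CommRing K] [IsDomain K] {ζ : K}
    (hζ : IsPrimitiveRoot ζ 3) : ζ ^ 2 + ζ + 1 = 0 := by
  have := hζ.geom_sum_eq_zero (by norm_num)
  simp only [Finset.sum_range_succ, Finset.sum_range_zero] at this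
  linear_combination this

theorem IsPrimitiveRoot.star_eq_sq_of_three {ζ : ℂ} (hζ : IsPrimitiveRoot ζ 3) :
    star ζ = ζ ^ 2 := by
  rw [Complex.star_def, ← Complex.inv_eq_conj (hζ.norm'_eq_one three_ne_zero)]
  exact inv_eq_of_mul_eq_one_right (by linear_combination hζ.pow_eq_one)

theorem mul_dft3_add_one_mul_dft3_add_two_sub_sq [StarRing R] (hω : ω ^ 2 + ω + 1 = 0)
    (hω_star : star ω = ω ^ 2) {q a b c : R} (ha : a * star a = q) (hb : b * star b = q)
    (hc : c * star c = q) (j : ℕ) :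
    q * (dft3 ω a b c (j + 1) * dft3 ω a b c (j + 2) - dft3 ω a b c j ^ 2) =
      -3 * a * b * c * star (dft3 ω a b c j) := by
  rw [dft3_add_one_mul_dft3_add_two_sub_sq hω]
  set x := ω ^ j
  have hx : x ^ 3 = 1 := by
    rw [← pow_mul, mul_comm, pow_mul, pow_three_eq_one_of_sq_add_self_add_one hω, one_pow]
  simp only [dft3, star_add, star_mul', star_pow, hω_star, ← pow_mul]
  rw [show 2 * j = j * 2 by ring, show 2 * (j * 2) = j * 4 by ring, pow_mul, pow_mul]
  linear_combination 3 * b * c * ha + 3 * x ^ 2 * a * c * hb + 3 * x ^ 4 * a * b * hc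
    + 3 * q * a * b * x * hx

end CubeRootOfUnity

theorem dft3_add_one_mul_dft3_add_two_sub_sq_ne_zero {K : Type*} [Field K] [CharZero K]
    [StarRing K] {ω q a b c : K} (hω : ω ^ 2 + ω + 1 = 0) (hω_star : star ω = ω ^ 2)
    (hq : q ≠ 0) (ha : a * star a = q) (hb : b * star b = q) (hc : c * star c = q) {j : ℕ}
    (hj : dft3 ω a b c j ≠ 0) :
    dft3 ω a b c (j + 1) * dft3 ω a b c (j + 2) - dft3 ω a b c j ^ 2 ≠ 0 := by
  have hne : ∀ x : K, x * star x = q → x ≠ 0 := by rintro x hx rfl; simp [hq.symm] at hx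
  intro h
  have := mul_dft3_add_one_mul_dft3_add_two_sub_sq hω hω_star ha hb hc j
  rw [h, mul_zero] at this
  simp [hne a ha, hne b hb, hne c hc, hj] at this

theorem stmt3 (q : ℝ) (hq : 0 < q) (G₀ G₁ G₂ : ℂ)
    (h0 : ‖G₀‖ = Real.sqrt q) (h1 : ‖G₁‖ = Real.sqrt q)
    (h2 : ‖G₂‖ = Real.sqrt q)
    (ζ : ℂ) (hζ : ζ = Complex.exp (2 * Real.pi * Complex.I / 3))
    (T : ℕ → ℂ) (hT : ∀ j : ℕ, T j = G₀ + ζ ^ j * G₁ + ζ ^ (2 * j) * G₂)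
    (M : Matrix (Fin 3) (Fin 3) ℂ)
    (hM : M = !![T 0, T 1, T 2; T 1, T 2, T 0; T 2, T 0, T 1]) :
    (∀ (k : ℕ) (r c : Fin k → Fin 3), Function.Injective r → Function.Injective c →
        (M.submatrix r c).det ≠ 0)
      ↔ (T 0 ≠ 0 ∧ T 1 ≠ 0 ∧ T 2 ≠ 0) := by
  obtain rfl : T = dft3 ζ G₀ G₁ G₂ := funext hT
  have hprim : IsPrimitiveRoot ζ 3 := by
    simpa [hζ] using Complex.isPrimitiveRoot_exp 3 (by norm_num)
  have hG : ∀ G : ℂ, ‖G‖ = √q → G ≠ 0 ∧ G * star G = q := fun G hG =>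
    ⟨norm_pos_iff.mp (hG ▸ Real.sqrt_pos.mpr hq),
      by rw [Complex.star_def, Complex.mul_conj', hG, ← Complex.ofReal_pow, Real.sq_sqrt hq.le]⟩
  set v : Fin 3 → ℂ := fun k => dft3 ζ G₀ G₁ G₂ k
  have hM_anti : M = Matrix.anticirculant v := by
    rw [hM]; ext i j; fin_cases i <;> fin_cases j <;> rfl
  rw [hM_anti]
  constructor
  · intro H
    exact ⟨(Matrix.anticirculant v).apply_ne_zero_of_forall_det_submatrix_ne_zero H 0 0,
      (Matrix.anticirculant v).apply_ne_zero_of_forall_det_submatrix_ne_zero H 0 1,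
      (Matrix.anticirculant v).apply_ne_zero_of_forall_det_submatrix_ne_zero H 0 2⟩
  · rintro ⟨h₀, h₁, h₂⟩ k r c hr hc
    have hv : ∀ k : Fin 3, v k ≠ 0 := by intro k; fin_cases k <;> assumption
    refine Matrix.det_submatrix_ne_zero_of_fin_three (Matrix.anticirculant v)
      (fun i j => hv (i + j)) (fun i j => ?_) ?_ hr hc
    · rw [adjugate_anticirculant_dft3_apply hprim.pow_eq_one]
      exact dft3_add_one_mul_dft3_add_two_sub_sq_ne_zero hprim.sq_add_self_add_one
        hprim.star_eq_sq_of_three (by exact_mod_cast hq.ne') (hG G₀ h0).2 (hG G₁ h1).2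
        (hG G₂ h2).2 (hv (i + j))
    · rw [det_anticirculant_dft3 hprim.sq_add_self_add_one]
      simp [(hG G₀ h0).1, (hG G₁ h1).1, (hG G₂ h2).1]
end
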